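/- Let M be a module over a commutative ring and let p_1, …, p_n : M → M be pairwise commuting idempotent linear endomorphisms. Define q = Σ_{∅ ≠ T ⊆ {1,…,n}} (−1)^{|T|+1} ∏_{i∈T} p_i. Then for every x ∈ M such that p_j x = x for some j, one has q x = x. -/
import Mathlib

theorem stmt0 {R M : Type*} [CommRing R] [AddCommGroup M] [Module R M]
    (n : ℕ) (p : Fin n → Module.End R M)
    (hidem : ∀ i, p i * p i = p i)
    (hcomm : ∀ i j, p i * p j = p j * p i) :
    ∀ (x : M) (j : Fin n), p j x = x →
      (∑ T ∈ (Finset.univ : Finset (Fin n)).powerset.filter (fun T => T ≠ ∅),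
          ((-1 : ℤ) ^ (T.card + 1)) •
            T.noncommProd p (fun a _ b _ _ => hcomm a b)) x = x := by
  intro x j hx
  set S := Subring.closure (Set.range p) with hS
  letI : CommRing S := Subring.closureCommRingOfComm (by
    rintro _ ⟨i, rfl⟩ _ ⟨k, rfl⟩; exact hcomm i k)
  set p' : Fin n → S := fun i => ⟨p i, Subring.subset_closure (Set.mem_range_self i)⟩ with hp'
  have key : ∀ T : Finset (Fin n),
      T.noncommProd p (fun a _ b _ _ => hcomm a b) = ((∏ i ∈ T, p' i : S) : Module.End R M) := by
    intro T
    have h1 := Finset.map_noncommProd T p' (fun _ _ _ _ _ => Commute.all _ _) S.subtype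
    rw [Finset.noncommProd_eq_prod] at h1
    exact h1.symm
  have expand : (∏ i, (1 - p' i) : S)
      = ∑ T ∈ (Finset.univ : Finset (Fin n)).powerset,
          ((-1 : ℤ) ^ T.card) • ∏ i ∈ T, p' i := by
    have h2 := Finset.prod_add (fun i => (-(p' i) : S)) (fun _ => (1 : S)) Finset.univ
    simp only [Finset.prod_const_one, mul_one] at h2
    rw [show (∏ i, (1 - p' i) : S) = ∏ i, (-(p' i) + 1) by
      apply Finset.prod_congr rfl; intros; ring]
    rw [h2]
    apply Finset.sum_congr rfl
    intro T _
    rw [zsmul_eq_mul]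
    push_cast
    calc ∏ i ∈ T, -p' i = ∏ i ∈ T, ((-1) * p' i) := by simp
      _ = (∏ _i ∈ T, (-1 : S)) * ∏ i ∈ T, p' i := Finset.prod_mul_distrib
      _ = (-1) ^ T.card * ∏ i ∈ T, p' i := by rw [Finset.prod_const]
  have hinS : (∑ T ∈ (Finset.univ : Finset (Fin n)).powerset.filter (fun T => T ≠ ∅),
      ((-1 : ℤ) ^ (T.card + 1)) • ∏ i ∈ T, p' i)
      = (1 - ∏ i, (1 - p' i) : S) := by
    rw [expand]
    have hemp : (∅ : Finset (Fin n)) ∈ (Finset.univ : Finset (Fin n)).powerset := by simp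
    rw [← Finset.add_sum_erase _ _ hemp]
    have hfe : (Finset.univ : Finset (Fin n)).powerset.filter (fun T => T ≠ ∅)
        = (Finset.univ : Finset (Fin n)).powerset.erase ∅ := by
      rw [Finset.filter_ne']
    rw [hfe]
    simp only [Finset.card_empty, pow_zero, one_smul, Finset.prod_empty]
    rw [sub_add_eq_sub_sub, sub_self, zero_sub, ← Finset.sum_neg_distrib]
    apply Finset.sum_congr rfl
    intro T _
    rw [pow_succ]
    push_cast
    module
  have hsum : (∑ T ∈ (Finset.univ : Finset (Fin n)).powerset.filter (fun T => T ≠ ∅),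
          ((-1 : ℤ) ^ (T.card + 1)) •
            T.noncommProd p (fun a _ b _ _ => hcomm a b))
      = ((1 - ∏ i, (1 - p' i) : S) : Module.End R M) := by
    rw [← hinS, AddSubmonoidClass.coe_finset_sum]
    apply Finset.sum_congr rfl
    intro T _
    rw [key T]
    push_cast
    rfl
  rw [hsum]
  have hprod : ((∏ i, (1 - p' i) : S) : Module.End R M) x = 0 := by
    rw [← Finset.prod_erase_mul _ _ (Finset.mem_univ j)]
    have hc : (((∏ i ∈ Finset.univ.erase j, (1 - p' i)) * (1 - p' j) : S) : Module.End R M)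
        = ((∏ i ∈ Finset.univ.erase j, (1 - p' i) : S) : Module.End R M) * (1 - p j) := by
      push_cast
      rfl
    rw [hc]
    have h0 : (1 - p j) x = 0 := by
      simp [LinearMap.sub_apply, hx]
    rw [Module.End.mul_apply, h0, map_zero]
  have hc2 : ((1 - ∏ i, (1 - p' i) : S) : Module.End R M)
      = 1 - ((∏ i, (1 - p' i) : S) : Module.End R M) := by
    push_cast; rfl
  rw [hc2, LinearMap.sub_apply, hprod, sub_zero, Module.End.one_apply]
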